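/- Let τ ⊆ c(Φ) be a Φ-tope and let (z_B)_{B ⊆ {1,…,N}} be rational numbers such that Σ_B z_B · [Q_neg^B](x) = [p(Φ,λ)](x) for every λ ∈ τ and every x ∈ V(Φ,λ). Then: (i) z_∅ = 1; (ii) the same identity Σ_B z_B · [Q_neg^B](x) = [p(Φ,λ)](x) for all x ∈ V(Φ,λ) holds for every λ in the closure of τ; (iii) for every λ ∈ τ − b(Φ), one has Σ_B z_B · [Q_neg^B](x) = [p(Φ,λ)](x) for all x ∈ V(Φ,λ) ∩ ℤ^N. -/

import Mathlib

open scoped Pointwise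
open Classical MvPolynomial

noncomputable section

namespace AC

section Defs

variable {E : Type*} [AddCommGroup E] [Module ℝ E]
variable {ι : Type*} [Fintype ι] [DecidableEq ι]

/-- Characteristic function of a set, with values in `ℝ`. -/
def charFn {α : Type*} (s : Set α) (x : α) : ℝ := if x ∈ s then 1 else 0

/-- The cone of nonnegative linear combinations of `{Ψ i : i ∈ I}`. -/
def coneOf (Ψ : ι → E) (I : Set ι) : Set E :=
  {v | ∃ c : ι → ℝ, (∀ i, 0 ≤ c i) ∧ (∀ i, i ∉ I → c i = 0) ∧ v = ∑ i, c i • Ψ i}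

/-- The cone of nonnegative linear combinations of all the `Ψ i`. -/
def fullCone (Ψ : ι → E) : Set E := coneOf Ψ Set.univ

/-- A cone is salient if it contains no line, i.e. `v, -v ∈ C → v = 0`. -/
def Salient (C : Set E) : Prop := ∀ v ∈ C, -v ∈ C → v = 0

/-- A wall: a hyperplane spanned by `dim E - 1` linearly independent members of `Ψ`. -/
def IsWall (Ψ : ι → E) (H : Submodule ℝ E) : Prop :=
  ∃ S : Finset ι, S.card + 1 = Module.finrank ℝ E ∧
    LinearIndependent ℝ (fun i : {x // x ∈ S} => Ψ i.1) ∧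
    H = Submodule.span ℝ (Ψ '' ↑S)

/-- An element is regular when it lies on no wall. -/
def IsRegular (Ψ : ι → E) (μ : E) : Prop :=
  ∀ H : Submodule ℝ E, IsWall Ψ H → μ ∉ H

/-- `G(Ψ,τ)`: generating subsets whose cone contains `τ`. -/
def Gens (Ψ : ι → E) (τ : Set E) : Set (Finset ι) :=
  {I | Submodule.span ℝ (Ψ '' ↑I) = ⊤ ∧ τ ⊆ coneOf Ψ ↑I}

/-- `I` is basic when `{Ψ i : i ∈ I}` is a basis of `E`. -/
def IsBasic (Ψ : ι → E) (I : Finset ι) : Prop :=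
  LinearIndependent ℝ (fun i : {x // x ∈ I} => Ψ i.1) ∧
    Submodule.span ℝ (Ψ '' ↑I) = ⊤

/-- `B(Ψ,τ)`: basic subsets whose cone contains `τ`. -/
def Bases (Ψ : ι → E) (τ : Set E) : Set (Finset ι) :=
  {I | IsBasic Ψ I ∧ τ ⊆ coneOf Ψ ↑I}

/-- The combinatorial Brianchon-Gram polynomial `X(Ψ,τ)`; the variable `Sum.inl i`
plays the role of `p i` and `Sum.inr i` plays the role of `q i`. -/
def BGpoly (Ψ : ι → E) (τ : Set E) : MvPolynomial (ι ⊕ ι) ℤ :=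
  ∑ I : Finset ι,
    if I ∈ Gens Ψ τ then
      (-1 : MvPolynomial (ι ⊕ ι) ℤ) ^ (I.card - Module.finrank ℝ E) *
        ((∏ j ∈ Iᶜ, X (Sum.inl j)) * ∏ i ∈ I, (X (Sum.inl i) + X (Sum.inr i)))
    else 0

/-- The geometric Brianchon-Gram function `X_geom(Ψ,τ)` on `ℝ^ι`. -/
def XGeom (Ψ : ι → E) (τ : Set E) (x : ι → ℝ) : ℝ :=
  ∑ I : Finset ι,
    if I ∈ Gens Ψ τ then
      (-1 : ℝ) ^ (I.card - Module.finrank ℝ E) *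
        ∏ j ∈ Iᶜ, (if 0 ≤ x j then (1 : ℝ) else 0)
    else 0

/-- The affine subspace `V(Ψ,λ)`. -/
def affSlice (Ψ : ι → E) (lam : E) : Set (ι → ℝ) := {x | ∑ i, x i • Ψ i = lam}

/-- The partition polytope `p(Ψ,λ)`. -/
def partPoly (Ψ : ι → E) (lam : E) : Set (ι → ℝ) :=
  {x | (∀ i, 0 ≤ x i) ∧ ∑ i, x i • Ψ i = lam}

/-- The semi-closed quadrant `Q_neg^B`. -/
def Qneg (B : Finset ι) : Set (ι → ℝ) :=
  {x | (∀ i ∈ B, x i < 0) ∧ ∀ i ∉ B, 0 ≤ x i}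

/-- The flipped sequence `Ψ_flip^B`. -/
def flipSeq (Ψ : ι → E) (B : Finset ι) : ι → E := fun i => if i ∈ B then -Ψ i else Ψ i

/-- The zonotope `b(Ψ)`. -/
def zonotope (Ψ : ι → E) : Set E :=
  {v | ∃ t : ι → ℝ, (∀ i, 0 ≤ t i ∧ t i ≤ 1) ∧ v = ∑ i, t i • Ψ i}

/-- `x ∈ ℝ^ι` is a lattice point when all its coordinates are integers. -/
def isLatticePt (x : ι → ℝ) : Prop := ∀ i, ∃ n : ℤ, x i = (n : ℝ)

/-- `v` lies in the open side of the hyperplane `H` containing `τ`. -/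
def InOpenSideOf (H : Submodule ℝ E) (τ : Set E) (v : E) : Prop :=
  ∃ ξ : E →ₗ[ℝ] ℝ, (∀ h ∈ H, ξ h = 0) ∧ (∀ μ ∈ τ, 0 < ξ μ) ∧ 0 < ξ v

/-- The change of variables exchanging `p i` and `q i` for `i ∈ A`. -/
def flipVar (A : Finset ι) : ι ⊕ ι → ι ⊕ ι
  | Sum.inl i => if i ∈ A then Sum.inr i else Sum.inl i
  | Sum.inr i => if i ∈ A then Sum.inl i else Sum.inr i

/-- The ring map `Flip_A`, exchanging `p i` and `q i` for `i ∈ A`. -/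
def FlipPoly (A : Finset ι) (P : MvPolynomial (ι ⊕ ι) ℤ) : MvPolynomial (ι ⊕ ι) ℤ :=
  MvPolynomial.rename (flipVar A) P

/-- Value substituted for the variable `p i` in the substitution `Geom_A`. -/
def geomValA (A : Finset ι) (x : ι → ℝ) : ι → ℝ := fun i =>
  if i ∈ A then (if 0 < x i then 1 else 0) else (if 0 ≤ x i then 1 else 0)

/-- The substitution `Geom_A`: substitute `1 - p i` for `q i`, then `[x i ≥ 0]`
for `p i` if `i ∉ A`, and `[x i > 0]` for `p i` if `i ∈ A`. -/
def GeomA (A : Finset ι) (P : MvPolynomial (ι ⊕ ι) ℤ) (x : ι → ℝ) : ℝ :=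
  MvPolynomial.aeval (Sum.elim (geomValA A x) (fun i => 1 - geomValA A x i)) P

/-- The substitution `Geom`: `[x i ≥ 0]` for `p i`, `[x i < 0]` for `q i`. -/
def Geom (P : MvPolynomial (ι ⊕ ι) ℤ) (x : ι → ℝ) : ℝ := GeomA ∅ P x

/-- The semi-closed flipped partition polytope `p_flip(Ψ,A,λ)`. -/
def pflip (Ψ : ι → E) (A : Finset ι) (lam : E) : Set (ι → ℝ) :=
  {x | (∑ i, x i • Ψ i = lam) ∧ (∀ i ∈ A, x i < 0) ∧ ∀ i ∉ A, 0 ≤ x i}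

/-- The linear map `x ↦ ∑ i, x i • Ψ i`. -/
def Mmap (Ψ : ι → E) : (ι → ℝ) →ₗ[ℝ] E where
  toFun x := ∑ i, x i • Ψ i
  map_add' x y := by simp [add_smul, Finset.sum_add_distrib]
  map_smul' c x := by simp [smul_smul, Finset.smul_sum]

/-- A polynomial function on a finite-dimensional real vector space. -/
def IsPolynomialFun {W : Type*} [AddCommGroup W] [Module ℝ W] (f : W → ℝ) : Prop :=
  ∃ (n : ℕ) (b : Module.Basis (Fin n) ℝ W) (p : MvPolynomial (Fin n) ℝ),
    ∀ v, f v = MvPolynomial.eval (fun i => b.repr v i) p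

/-- `Λ` is a (full) lattice in `W`: the ℤ-span of some ℝ-basis. -/
def IsLattice {W : Type*} [AddCommGroup W] [Module ℝ W] (Λ : AddSubgroup W) : Prop :=
  ∃ b : Module.Basis (Fin (Module.finrank ℝ W)) ℝ W,
    ∀ v, v ∈ Λ ↔ ∀ i, ∃ n : ℤ, b.repr v i = (n : ℝ)

/-- Quasi-polynomial function on the lattice `Λ`: polynomial on each coset of
a finite-index sublattice (here `D • Λ`). -/
def IsQuasiPolynomialOn {W : Type*} [AddCommGroup W] [Module ℝ W]
    (Λ : AddSubgroup W) (f : W → ℝ) : Prop :=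
  ∃ D : ℕ, 0 < D ∧ ∀ lam₀ ∈ Λ, ∃ P : W → ℝ, IsPolynomialFun P ∧
    ∀ lam' ∈ Λ, f (lam₀ + D • lam') = P (lam₀ + D • lam')

end Defs

section Topes

variable {E : Type*} [AddCommGroup E] [Module ℝ E] [TopologicalSpace E]
variable {ι : Type*} [Fintype ι]

/-- A tope: a connected component of the set of regular elements. -/
def IsTope (Ψ : ι → E) (τ : Set E) : Prop :=
  ∃ μ, IsRegular Ψ μ ∧ τ = connectedComponentIn {x | IsRegular Ψ x} μ

/-- Two topes are adjacent along the wall `H` when the intersection of their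
closures is contained in `H` and spans `H`. -/
def Adjacent (Ψ : ι → E) (τ₁ τ₂ : Set E) (H : Submodule ℝ E) : Prop :=
  IsTope Ψ τ₁ ∧ IsTope Ψ τ₂ ∧ τ₁ ≠ τ₂ ∧ IsWall Ψ H ∧
    closure τ₁ ∩ closure τ₂ ⊆ (H : Set E) ∧
    Submodule.span ℝ (closure τ₁ ∩ closure τ₂) = H

end Topes

/-!
The identity at `(λ, x)` involves `z` only at the sign pattern `B = {i | x i < 0}` of `x`, where it
reads `z_B = [B = ∅]`. So it suffices that every sign pattern occurring over `closure τ`, or at a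
lattice point over `τ - b(Φ)`, already occurs over `τ`. A tope is a chamber of the finitely many
walls, each cut out by a linear form of constant sign on it, hence open and convex. For
`λ ∈ closure τ`, moving `λ` slightly towards `μ = Φ c ∈ τ` (`c ≥ 0`) and `x` towards `c` keeps the
sign pattern. For `λ = μ - Φ t` with `μ ∈ τ` and `0 ≤ t ≤ 1`, the point `x + (1 - ε) t` lies over
`μ - ε Φ t ∈ τ` and, the negative coordinates of a lattice point being `≤ -1`, has the sign pattern
of `x`.
-/

open Filter Topology

theorem exists_linearMap_ker_eq_of_finrank_quotient_eq_one {K V : Type*} [Field K]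
    [AddCommGroup V] [Module K V] [FiniteDimensional K V] (H : Submodule K V) (hH : Module.finrank K (V ⧸ H) = 1) :
    ∃ ξ : V →ₗ[K] K, LinearMap.ker ξ = H := by
  obtain ⟨e⟩ := FiniteDimensional.nonempty_linearEquiv_of_finrank_eq
    (hH.trans (Module.finrank_self K).symm)
  refine ⟨e.toLinearMap ∘ₗ H.mkQ, ?_⟩
  rw [LinearMap.ker_comp, LinearEquiv.ker, Submodule.comap_bot, H.ker_mkQ]

section Chamber

variable {E : Type*} [AddCommGroup E] [Module ℝ E] [TopologicalSpace E] {J : Type*}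

def chamber (ξ : J → E →L[ℝ] ℝ) (μ : E) : Set E := {x | ∀ j, 0 < ξ j μ * ξ j x}

theorem isOpen_chamber [Finite J] (ξ : J → E →L[ℝ] ℝ) (μ : E) : IsOpen (chamber ξ μ) := by
  simp only [chamber, Set.ofPred_forall]
  exact isOpen_iInter_of_finite fun j => isOpen_lt continuous_const (by fun_prop)

theorem convex_chamber (ξ : J → E →L[ℝ] ℝ) (μ : E) : Convex ℝ (chamber ξ μ) := by
  simp only [chamber, Set.ofPred_forall]
  exact convex_iInter fun j =>
    convex_halfSpace_gt (ξ j μ • (ξ j : E →ₗ[ℝ] ℝ)).isLinear 0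

theorem connectedComponentIn_eq_chamber [IsTopologicalAddGroup E] [ContinuousSMul ℝ E]
    (ξ : J → E →L[ℝ] ℝ) {μ : E} (hμ : ∀ j, ξ j μ ≠ 0) :
    connectedComponentIn {x | ∀ j, ξ j x ≠ 0} μ = chamber ξ μ := by
  set U := {x | ∀ j, ξ j x ≠ 0}
  refine Set.Subset.antisymm (fun x hx j => ?_) ?_
  · by_contra! hle
    have hzero : (0 : ℝ) ∈ Set.uIcc (ξ j μ) (ξ j x) := by
      rcases mul_nonpos_iff.1 hle with h | h
      exacts [Set.mem_uIcc.2 (Or.inr h.symm), Set.mem_uIcc.2 (Or.inl h)]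
    obtain ⟨w, hw, hw0⟩ := (isPreconnected_connectedComponentIn.image _
      (ξ j).continuous.continuousOn).ordConnected.uIcc_subset
      ⟨μ, mem_connectedComponentIn (F := U) hμ, rfl⟩ ⟨x, hx, rfl⟩ hzero
    exact connectedComponentIn_subset U μ hw j hw0
  · refine (convex_chamber ξ μ).isPreconnected.subset_connectedComponentIn
      (fun j => mul_self_pos.2 (hμ j)) fun x hx j h0 => ?_
    simpa [h0] using hx j

end Chamber

section Topes

variable {F : Type*} [NormedAddCommGroup F] [NormedSpace ℝ F] {ι : Type*} {Φ : ι → F}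

theorem IsWall.exists_ker_eq [FiniteDimensional ℝ F] {H : Submodule ℝ F} (hH : IsWall Φ H) :
    ∃ ξ : F →L[ℝ] ℝ, ∀ x, ξ x = 0 ↔ x ∈ H := by
  obtain ⟨S, hcard, hli, rfl⟩ := hH
  have hrank : Module.finrank ℝ (Submodule.span ℝ (Φ '' S)) = S.card := by
    rw [Set.image_eq_range]
    exact (finrank_span_eq_card hli).trans (Fintype.card_coe S)
  have hquot := (Submodule.span ℝ (Φ '' S)).finrank_quotient_add_finrank
  obtain ⟨ξ, hξ⟩ :=
    exists_linearMap_ker_eq_of_finrank_quotient_eq_one (Submodule.span ℝ (Φ '' S)) (by omega)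
  exact ⟨LinearMap.toContinuousLinearMap ξ, fun x => by rw [← hξ]; rfl⟩

theorem finite_setOf_isWall [Finite ι] (Φ : ι → F) : {H | IsWall Φ H}.Finite :=
  (Set.finite_range fun S : Finset ι => Submodule.span ℝ (Φ '' S)).subset
    fun _ ⟨S, _, _, hS⟩ => ⟨S, hS.symm⟩

theorem IsTope.nonempty {τ : Set F} (hτ : IsTope Φ τ) : τ.Nonempty := by
  obtain ⟨μ, hμ, rfl⟩ := hτ
  exact ⟨μ, mem_connectedComponentIn hμ⟩

theorem IsTope.isOpen_and_convex [FiniteDimensional ℝ F] [Finite ι] {τ : Set F}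
    (hτ : IsTope Φ τ) : IsOpen τ ∧ Convex ℝ τ := by
  obtain ⟨μ, hμ, rfl⟩ := hτ
  have := (finite_setOf_isWall Φ).to_subtype
  choose ξ hξ using fun H : {H | IsWall Φ H} => H.2.exists_ker_eq
  have hreg : ∀ x, IsRegular Φ x ↔ ∀ H, ξ H x ≠ 0 := fun x => by
    simp only [IsRegular, ne_eq, hξ, Subtype.forall, Set.mem_ofPred_eq]
  simp only [hreg] at hμ ⊢
  rw [connectedComponentIn_eq_chamber ξ hμ]
  exact ⟨isOpen_chamber ξ μ, convex_chamber ξ μ⟩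

end Topes

section Quadrants

variable {ι : Type*} [Fintype ι]

def negSet (x : ι → ℝ) : Finset ι := {i | x i < 0}

theorem mem_negSet {x : ι → ℝ} {i : ι} : i ∈ negSet x ↔ x i < 0 := by
  simp [negSet]

theorem mem_Qneg_iff {B : Finset ι} {x : ι → ℝ} : x ∈ Qneg B ↔ negSet x = B := by
  simp only [Qneg, Set.mem_ofPred_eq, Finset.ext_iff, mem_negSet]
  constructor
  · rintro ⟨hneg, hnonneg⟩ i
    exact ⟨fun h => by_contra fun hi => (hnonneg i hi).not_gt h, hneg i⟩
  · intro h
    exact ⟨fun i hi => (h i).2 hi, fun i hi => not_lt.1 fun h' => hi ((h i).1 h')⟩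

theorem negSet_eq_empty_iff {x : ι → ℝ} : negSet x = ∅ ↔ ∀ i, 0 ≤ x i := by
  simp [Finset.eq_empty_iff_forall_notMem, mem_negSet]

theorem sum_mul_charFn_Qneg (z : Finset ι → ℝ) (x : ι → ℝ) :
    ∑ B, z B * charFn (Qneg B) x = z (negSet x) := by
  rw [Finset.sum_eq_single (negSet x)]
  · simp [charFn, mem_Qneg_iff]
  · intro B _ hB
    simp [charFn, mem_Qneg_iff, Ne.symm hB]
  · simp

theorem eventually_negSet_lineMap_eq (x : ι → ℝ) {c : ι → ℝ} (hc : ∀ i, 0 ≤ c i) :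
    ∀ᶠ s in 𝓝[>] (0 : ℝ), negSet ((1 - s) • x + s • c) = negSet x := by
  have hlim : ∀ i, Tendsto (fun s : ℝ => ((1 - s) • x + s • c) i) (𝓝[>] 0) (𝓝 (x i)) := by
    intro i
    refine tendsto_nhdsWithin_of_tendsto_nhds ?_
    have hcont : Continuous fun s : ℝ => ((1 - s) • x + s • c) i := by fun_prop
    simpa using hcont.tendsto 0
  filter_upwards [(eventually_all_finset (negSet x)).2 fun i hi =>
      (hlim i).eventually (gt_mem_nhds (mem_negSet.1 hi)), Ioo_mem_nhdsGT one_pos]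
    with s hneg hs
  ext i
  refine ⟨fun h => ?_, fun hi => mem_negSet.2 (hneg i hi)⟩
  rw [mem_negSet] at h ⊢
  by_contra! hxi
  simp only [Pi.add_apply, Pi.smul_apply, smul_eq_mul] at h
  nlinarith [hc i, hs.1, hs.2]

theorem negSet_add_smul_of_isLatticePt {x t : ι → ℝ} (hx : isLatticePt x)
    (ht : ∀ i, 0 ≤ t i ∧ t i ≤ 1) {a : ℝ} (ha₀ : 0 ≤ a) (ha₁ : a < 1) :
    negSet (x + a • t) = negSet x := by
  ext i
  obtain ⟨n, hn⟩ := hx i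
  obtain ⟨ht₀, ht₁⟩ := ht i
  simp only [mem_negSet, Pi.add_apply, Pi.smul_apply, smul_eq_mul, hn]
  constructor
  · intro h
    by_contra! h'
    nlinarith
  · intro h
    have hn₁ : n ≤ -1 := by
      have := Int.cast_lt_zero.1 h
      omega
    have : (n : ℝ) ≤ -1 := by exact_mod_cast hn₁
    nlinarith

variable {E : Type*} [AddCommGroup E] [Module ℝ E] {Φ : ι → E} {lam : E} {x : ι → ℝ}

theorem charFn_partPoly [DecidableEq ι] (hx : x ∈ affSlice Φ lam) :
    charFn (partPoly Φ lam) x = if negSet x = ∅ then 1 else 0 := by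
  unfold charFn
  by_cases h : ∀ i, 0 ≤ x i
  · rw [if_pos ⟨h, hx⟩, if_pos (negSet_eq_empty_iff.2 h)]
  · rw [if_neg fun hp => h hp.1, if_neg (mt negSet_eq_empty_iff.1 h)]

theorem quadrant_identity_iff [DecidableEq ι] (z : Finset ι → ℚ) (hx : x ∈ affSlice Φ lam) :
    ∑ B, (z B : ℝ) * charFn (Qneg B) x = charFn (partPoly Φ lam) x ↔
      (z (negSet x) : ℝ) = if negSet x = ∅ then 1 else 0 := by
  rw [sum_mul_charFn_Qneg (fun B => (z B : ℝ)), charFn_partPoly hx]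

end Quadrants

section SignPatterns

variable {E : Type*} [AddCommGroup E] [Module ℝ E] {ι : Type*} [Fintype ι] {Φ : ι → E}
  {τ : Set E}

def signPatterns (Φ : ι → E) (τ : Set E) : Set (Finset ι) :=
  {B | ∃ lam ∈ τ, ∃ y ∈ affSlice Φ lam, negSet y = B}

theorem empty_mem_signPatterns (hne : τ.Nonempty) (hτc : τ ⊆ fullCone Φ) :
    ∅ ∈ signPatterns Φ τ := by
  obtain ⟨μ, hμ⟩ := hne
  obtain ⟨c, hc, -, hcμ⟩ := hτc hμ
  exact ⟨μ, hμ, c, hcμ.symm, negSet_eq_empty_iff.2 hc⟩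

variable [TopologicalSpace E] [IsTopologicalAddGroup E] [ContinuousSMul ℝ E]

theorem negSet_mem_signPatterns_of_mem_closure (hopen : IsOpen τ) (hconv : Convex ℝ τ)
    (hne : τ.Nonempty) (hτc : τ ⊆ fullCone Φ) {lam : E} (hlam : lam ∈ closure τ)
    {x : ι → ℝ} (hx : x ∈ affSlice Φ lam) : negSet x ∈ signPatterns Φ τ := by
  obtain ⟨μ, hμ⟩ := hne
  obtain ⟨c, hc, -, hcμ⟩ := hτc hμ
  obtain ⟨s, hneg, hs⟩ :=
    ((eventually_negSet_lineMap_eq x hc).and (Ioo_mem_nhdsGT one_pos)).exists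
  refine ⟨(1 - s) • lam + s • μ, ?_, (1 - s) • x + s • c, ?_, hneg⟩
  · have hcombo := hconv.combo_closure_interior_mem_interior hlam
      (hopen.interior_eq.symm ▸ hμ) (sub_nonneg.2 hs.2.le) hs.1 (sub_add_cancel 1 s)
    rwa [hopen.interior_eq] at hcombo
  · change Mmap Φ ((1 - s) • x + s • c) = _
    rw [map_add, map_smul, map_smul]
    exact congr_arg₂ (· + ·) (congr_arg _ hx) (congr_arg _ hcμ.symm)

theorem negSet_mem_signPatterns_of_mem_sub_zonotope (hopen : IsOpen τ) {lam : E}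
    (hlam : lam ∈ τ - zonotope Φ) {x : ι → ℝ} (hx : x ∈ affSlice Φ lam)
    (hxlat : isLatticePt x) : negSet x ∈ signPatterns Φ τ := by
  obtain ⟨μ, hμ, v, ⟨t, ht, rfl⟩, rfl⟩ := hlam
  have hlim : Tendsto (fun ε : ℝ => μ - ε • Mmap Φ t) (𝓝[>] 0) (𝓝 μ) := by
    refine tendsto_nhdsWithin_of_tendsto_nhds ?_
    have hcont : Continuous fun ε : ℝ => μ - ε • Mmap Φ t := by fun_prop
    simpa using hcont.tendsto 0
  obtain ⟨ε, hετ, hε⟩ :=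
    ((hlim.eventually (hopen.mem_nhds hμ)).and (Ioo_mem_nhdsGT one_pos)).exists
  refine ⟨_, hετ, x + (1 - ε) • t, ?_,
    negSet_add_smul_of_isLatticePt hxlat ht (by linarith [hε.2]) (by linarith [hε.1])⟩
  change Mmap Φ (x + (1 - ε) • t) = _
  rw [map_add, map_smul, show Mmap Φ x = _ from hx]
  change _ - Mmap Φ t + _ = _
  module

end SignPatterns

theorem quadrant_decomposition_continuity_general
    {F : Type*} [NormedAddCommGroup F] [NormedSpace ℝ F] [FiniteDimensional ℝ F]
    {N : ℕ} (Φ : Fin N → F)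
    (τ : Set F) (hτ : IsTope Φ τ) (hτc : τ ⊆ fullCone Φ)
    (z : Finset (Fin N) → ℚ)
    (hz : ∀ lam ∈ τ, ∀ x ∈ affSlice Φ lam,
      ∑ B : Finset (Fin N), (z B : ℝ) * charFn (Qneg B) x = charFn (partPoly Φ lam) x) :
    z ∅ = 1 ∧
    (∀ lam ∈ closure τ, ∀ x ∈ affSlice Φ lam,
      ∑ B : Finset (Fin N), (z B : ℝ) * charFn (Qneg B) x = charFn (partPoly Φ lam) x) ∧
    (∀ lam ∈ τ - zonotope Φ, ∀ x ∈ affSlice Φ lam, isLatticePt x →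
      ∑ B : Finset (Fin N), (z B : ℝ) * charFn (Qneg B) x = charFn (partPoly Φ lam) x) := by
  obtain ⟨hopen, hconv⟩ := hτ.isOpen_and_convex
  have hpattern : ∀ B ∈ signPatterns Φ τ, (z B : ℝ) = if B = ∅ then 1 else 0 := by
    rintro _ ⟨lam, hlam, y, hy, rfl⟩
    exact (quadrant_identity_iff z hy).1 (hz lam hlam y hy)
  refine ⟨?_, fun lam hlam x hx => ?_, fun lam hlam x hx hxlat => ?_⟩
  · exact_mod_cast (hpattern ∅ (empty_mem_signPatterns hτ.nonempty hτc)).trans (if_pos rfl)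
  · exact (quadrant_identity_iff z hx).2 (hpattern _
      (negSet_mem_signPatterns_of_mem_closure hopen hconv hτ.nonempty hτc hlam hx))
  · exact (quadrant_identity_iff z hx).2 (hpattern _
      (negSet_mem_signPatterns_of_mem_sub_zonotope hopen hlam hx hxlat))

/-- Continuity properties of decompositions into quadrants: if
`∑_B z_B [Q_neg^B] = [p(Φ,λ)]` on `V(Φ,λ)` for every `λ ∈ τ`, then
(i) `z_∅ = 1`, (ii) the same identity holds for every `λ` in the closure of
`τ`, and (iii) it holds on lattice points of `V(Φ,λ)` for `λ ∈ τ - b(Φ)`. -/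
theorem quadrant_decomposition_continuity
    {F : Type*} [NormedAddCommGroup F] [NormedSpace ℝ F] [FiniteDimensional ℝ F]
    {N : ℕ} (Φ : Fin N → F)
    (hne : ∀ i, Φ i ≠ 0)
    (hgen : Submodule.span ℝ (Set.range Φ) = ⊤)
    (hsal : ∃ a : F →ₗ[ℝ] ℝ, ∀ i, 0 < a (Φ i))
    (τ : Set F) (hτ : IsTope Φ τ) (hτc : τ ⊆ fullCone Φ)
    (z : Finset (Fin N) → ℚ)
    (hz : ∀ lam ∈ τ, ∀ x ∈ affSlice Φ lam,
      ∑ B : Finset (Fin N), (z B : ℝ) * charFn (Qneg B) x = charFn (partPoly Φ lam) x) :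
    z ∅ = 1 ∧
    (∀ lam ∈ closure τ, ∀ x ∈ affSlice Φ lam,
      ∑ B : Finset (Fin N), (z B : ℝ) * charFn (Qneg B) x = charFn (partPoly Φ lam) x) ∧
    (∀ lam ∈ τ - zonotope Φ, ∀ x ∈ affSlice Φ lam, isLatticePt x →
      ∑ B : Finset (Fin N), (z B : ℝ) * charFn (Qneg B) x = charFn (partPoly Φ lam) x) :=
  quadrant_decomposition_continuity_general Φ τ hτ hτc z hz

end AC
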